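/- Let τ > 0, let φ : ℝ → ℝ satisfy |φ(x)| ≤ 1 for all x, and set ψ(x) := τ⁻¹·φ(τ·x). Given p ∈ ℕ and coefficients ã_0, …, ã_p ∈ ℝ, define δ_{p+1} := 0 and, recursively for k = p down to 0, a_k := ψ(ã_k + δ_{k+1}) and δ_k := τ·(ã_k + δ_{k+1} − a_k). Then |a_k| ≤ τ⁻¹ for every 0 ≤ k ≤ p, and Σ_{k=0}^{p} a_k·τ^k + δ_0·τ⁻¹ = Σ_{k=0}^{p} ã_k·τ^k. -/
import Mathlib


open Finset

/-- The digit shifting procedure applied from the highest coefficient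
downwards: given coefficients `atil 0, …, atil p` (the ã's), with `δ (p+1) = 0` and, for
`k ≤ p`, `a k = ψ (atil k + δ (k+1))` and `δ k = τ * (atil k + δ (k+1) - a k)`, where
`ψ x = τ⁻¹ * φ (τ * x)` and `|φ| ≤ 1`, all the new coefficients satisfy `|a k| ≤ τ⁻¹` and
`Σ_{k=0}^{p} a k · τ^k + δ 0 · τ⁻¹ = Σ_{k=0}^{p} atil k · τ^k`. -/
theorem digit_shifting_procedure
    (τ : ℝ) (hτ : 0 < τ) (φ : ℝ → ℝ) (hφ : ∀ x : ℝ, |φ x| ≤ 1)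
    (ψ : ℝ → ℝ) (hψ : ∀ x : ℝ, ψ x = τ⁻¹ * φ (τ * x))
    (p : ℕ) (atil a δ : ℕ → ℝ)
    (hδtop : δ (p + 1) = 0)
    (hak : ∀ k ≤ p, a k = ψ (atil k + δ (k + 1)))
    (hδk : ∀ k ≤ p, δ k = τ * (atil k + δ (k + 1) - a k)) :
    (∀ k ≤ p, |a k| ≤ τ⁻¹) ∧
      (∑ k ∈ Finset.range (p + 1), a k * τ ^ k) + δ 0 * τ⁻¹ =
        ∑ k ∈ Finset.range (p + 1), atil k * τ ^ k := by
  constructor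
  · intro k hk
    rw [hak k hk, hψ]
    rw [abs_mul, abs_of_pos (inv_pos.mpr hτ)]
    calc τ⁻¹ * |φ (τ * (atil k + δ (k + 1)))| ≤ τ⁻¹ * 1 :=
          mul_le_mul_of_nonneg_left (hφ _) (le_of_lt (inv_pos.mpr hτ))
      _ = τ⁻¹ := mul_one _
  · have key : ∀ k ≤ p, atil k * τ ^ k - a k * τ ^ k
        = δ k * τ ^ k * τ⁻¹ - δ (k + 1) * τ ^ (k + 1) * τ⁻¹ := by
      intro k hk
      have hτ' : τ ≠ 0 := ne_of_gt hτ
      rw [hδk k hk]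
      field_simp
      ring
    have tele : ∑ k ∈ Finset.range (p + 1), (atil k * τ ^ k - a k * τ ^ k)
        = δ 0 * τ ^ 0 * τ⁻¹ - δ (p + 1) * τ ^ (p + 1) * τ⁻¹ := by
      rw [← Finset.sum_range_sub' (fun k => δ k * τ ^ k * τ⁻¹) (p + 1)]
      apply Finset.sum_congr rfl
      intro k hk
      exact key k (Nat.lt_succ_iff.mp (Finset.mem_range.mp hk))
    rw [Finset.sum_sub_distrib, hδtop] at tele
    simp at tele
    linarith [tele]
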